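/- Let L(z) = M_T(z/2)·M_V(z)·M_T(z/2) be the leapfrog matrix for the harmonic oscillator, let α₁ = 1/4 + (i/4)·√(5/3), α₂ = 1/2, and let R(h) be the entrywise real part of L(conj(α₁) h)·L(α₂ h)·L(α₁ h). Then (fun h : ℝ => R(−h)·R(h) − 1) is O(h¹²) as h → 0; that is, the real projection of this fourth-order symmetric-conjugate composition is pseudo-symmetric of order 11 for the harmonic oscillator. -/

import Mathlib

open Matrix Asymptotics Filter

attribute [local instance] Matrix.normedAddCommGroup Matrix.normedSpace

/-- Exact evolution matrix of the harmonic oscillator `q' = p`, `p' = -q`. -/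
noncomputable def MH (z : ℂ) : Matrix (Fin 2) (Fin 2) ℂ :=
  !![Complex.cos z, Complex.sin z; -Complex.sin z, Complex.cos z]

/-- Exact evolution matrix of the kinetic part. -/
def MT (z : ℂ) : Matrix (Fin 2) (Fin 2) ℂ := !![1, z; 0, 1]

/-- Exact evolution matrix of the potential part. -/
def MV (z : ℂ) : Matrix (Fin 2) (Fin 2) ℂ := !![1, 0; -z, 1]

/-- The leapfrog/Strang splitting matrix. -/
noncomputable def L (z : ℂ) : Matrix (Fin 2) (Fin 2) ℂ := MT (z / 2) * MV z * MT (z / 2)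

/-- The coefficient `α₁ = 1/4 + (i/4) √(5/3)`. -/
noncomputable def α₁ : ℂ := 1 / 4 + Complex.I / 4 * (Real.sqrt (5 / 3) : ℝ)

/-- The coefficient `α₂ = 1/2`. -/
noncomputable def α₂ : ℂ := 1 / 2

/-- The three-stage symmetric-conjugate composition `S_{ᾱ₁h} ∘ S_{α₂h} ∘ S_{α₁h}`. -/
noncomputable def Ψ₃ (h : ℝ) : Matrix (Fin 2) (Fin 2) ℂ :=
  L (starRingEnd ℂ α₁ * (h : ℂ)) * L (α₂ * (h : ℂ)) * L (α₁ * (h : ℂ))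

/-- The real projection of `Ψ₃`. -/
noncomputable def Rproj (h : ℝ) : Matrix (Fin 2) (Fin 2) ℝ := (Ψ₃ h).map Complex.re

/-!
`L(-z) = L(z)⁻¹` and `L` has real coefficients, so `Ψ₃(-h) · conj Ψ₃(h) = 1`. Writing
`Ψ₃ = R + i I` and taking real parts gives `R(-h) R(h) - 1 = -I(-h) I(h)`. Now
`2i I(h) = Ψ₃(h) - conj Ψ₃(h)` is the difference between the composition and its reversal.
Because `α₁ + ᾱ₁ = 1/2` and `α₁ ᾱ₁ = 1/6` (the order conditions that make the method of order
four), this difference is `(α₁ - ᾱ₁) h⁶ / 144 · diag(1, -1)`, so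
`R(-h) R(h) - 1 = -(Im α₁ / 144)² h¹²` exactly.
-/

open ComplexConjugate

theorem Matrix.of_fin_two_eq_iff {α : Type*} {a b c d a' b' c' d' : α} :
    !![a, b; c, d] = !![a', b'; c', d'] ↔ a = a' ∧ b = b' ∧ c = c' ∧ d = d' := by
  simp [Matrix.vecCons_inj, and_assoc]

theorem Matrix.map_re_mul {l m n : Type*} [Fintype m] (A : Matrix l m ℂ) (B : Matrix m n ℂ) :
    (A * B).map Complex.re =
      A.map Complex.re * B.map Complex.re - A.map Complex.im * B.map Complex.im := by
  ext i j
  simp [Matrix.mul_apply, Complex.re_sum, Finset.sum_sub_distrib]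

theorem Matrix.map_re_mul_map_re_sub_one {n : Type*} [Fintype n] [DecidableEq n]
    {A B : Matrix n n ℂ} (hAB : A * B.map conj = 1) :
    A.map Complex.re * B.map Complex.re - 1 = -(A.map Complex.im * B.map Complex.im) := by
  have hre : (B.map conj).map Complex.re = B.map Complex.re := by ext; simp
  have him : (B.map conj).map Complex.im = -B.map Complex.im := by ext; simp
  have h := congrArg (Matrix.map · Complex.re) hAB
  simp only [Matrix.map_re_mul, hre, him, Matrix.mul_neg, sub_neg_eq_add,
    Matrix.map_one _ Complex.zero_re Complex.one_re] at h
  rw [← h]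
  abel

theorem Matrix.map_im_map_ofReal {m n : Type*} (A : Matrix m n ℂ) :
    (A.map Complex.im).map Complex.ofReal = (2 * Complex.I)⁻¹ • (A - A.map conj) := by
  ext i j
  simp [Complex.im_eq_sub_conj, div_eq_inv_mul]

lemma L_eq (z : ℂ) : L z = !![1 - z ^ 2 / 2, z - z ^ 3 / 4; -z, 1 - z ^ 2 / 2] := by
  simp only [L, MT, MV, mul_fin_two, Matrix.of_fin_two_eq_iff]
  refine ⟨?_, ?_, ?_, ?_⟩ <;> ring

lemma L_neg_mul_self (z : ℂ) : L (-z) * L z = 1 := by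
  simp only [L_eq, mul_fin_two, one_fin_two, Matrix.of_fin_two_eq_iff]
  refine ⟨?_, ?_, ?_, ?_⟩ <;> ring

lemma L_map_conj (z : ℂ) : (L z).map conj = L (conj z) := by
  rw [L_eq, L_eq]
  ext i j
  fin_cases i <;> fin_cases j <;> simp [map_ofNat]

lemma L_mul_L_mul_L_sub_reverse (u v z : ℂ) (hsum : u + v = 1 / 2) (hprod : u * v = 1 / 6) :
    L (v * z) * L (z / 2) * L (u * z) - L (u * z) * L (z / 2) * L (v * z) =
      ((u - v) * z ^ 6 / 144) • !![1, 0; 0, -1] := by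
  obtain rfl : v = 1 / 2 - u := by linear_combination hsum
  rw [Matrix.eta_fin_two (_ - _), Matrix.eta_fin_two (_ • _)]
  simp only [L_eq, mul_fin_two, Matrix.sub_apply, Matrix.smul_apply, Matrix.of_apply,
    Matrix.cons_val', Matrix.cons_val_zero, Matrix.cons_val_one, Matrix.cons_val_fin_one,
    smul_eq_mul, Matrix.of_fin_two_eq_iff]
  -- the cofactor is the quotient of the diagonal entry by `u (1/2 - u) - 1/6`
  refine ⟨?_, by ring, by ring, ?_⟩
  · linear_combination (-1/48 + 13/192 * u + 3/32 * u ^ 2 - 1/8 * u ^ 3) * z ^ 6 * hprod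
  · linear_combination -(-1/48 + 13/192 * u + 3/32 * u ^ 2 - 1/8 * u ^ 3) * z ^ 6 * hprod

lemma α₁_add_conj : α₁ + conj α₁ = 1 / 2 := by
  simp only [α₁, map_add, map_div₀, map_mul, Complex.conj_I, Complex.conj_ofReal, map_one,
    map_ofNat]
  ring

lemma α₁_mul_conj : α₁ * conj α₁ = 1 / 6 := by
  have hs : ((√(5 / 3) : ℝ) : ℂ) ^ 2 = 5 / 3 := by
    rw [← Complex.ofReal_pow, Real.sq_sqrt (by norm_num)]
    push_cast
    ring
  simp only [α₁, map_add, map_div₀, map_mul, Complex.conj_I, Complex.conj_ofReal, map_one,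
    map_ofNat]
  linear_combination -((√(5 / 3) : ℝ) : ℂ) ^ 2 / 16 * Complex.I_sq + 1 / 16 * hs

lemma Ψ₃_neg_mul_map_conj (h : ℝ) : Ψ₃ (-h) * (Ψ₃ h).map conj = 1 := by
  have hα₂ : conj α₂ = α₂ := by simp [α₂, map_ofNat]
  simp only [Ψ₃, Matrix.map_mul, L_map_conj, map_mul, Complex.conj_conj, Complex.conj_ofReal,
    hα₂, Complex.ofReal_neg, mul_neg, Matrix.mul_assoc]
  rw [← Matrix.mul_assoc (L (-(α₁ * h))), L_neg_mul_self, Matrix.one_mul,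
    ← Matrix.mul_assoc (L (-(α₂ * h))), L_neg_mul_self, Matrix.one_mul, L_neg_mul_self]

lemma Ψ₃_sub_map_conj (h : ℝ) :
    Ψ₃ h - (Ψ₃ h).map conj = (2 * α₁.im * Complex.I * h ^ 6 / 144) • !![1, 0; 0, -1] := by
  have hα₂ : α₂ * (h : ℂ) = h / 2 := by
    rw [α₂]
    ring
  simp only [Ψ₃, Matrix.map_mul, L_map_conj, map_mul, Complex.conj_conj, Complex.conj_ofReal,
    hα₂, map_div₀, map_ofNat]
  rw [L_mul_L_mul_L_sub_reverse α₁ (conj α₁) h α₁_add_conj α₁_mul_conj, Complex.sub_conj]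
  congr 1
  push_cast
  ring

lemma Ψ₃_map_im (h : ℝ) :
    (Ψ₃ h).map Complex.im = (α₁.im * h ^ 6 / 144) • !![1, 0; 0, -1] := by
  refine Matrix.map_injective Complex.ofReal_injective ?_
  have hscalar : (2 * Complex.I)⁻¹ * (2 * α₁.im * Complex.I * h ^ 6 / 144) =
      α₁.im * h ^ 6 / 144 := by
    field_simp [Complex.I_ne_zero]
  dsimp only
  rw [Matrix.map_im_map_ofReal, Ψ₃_sub_map_conj, smul_smul, hscalar]
  ext i j
  fin_cases i <;> fin_cases j <;> simp

lemma Rproj_neg_mul_Rproj_sub_one (h : ℝ) :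
    Rproj (-h) * Rproj h - 1 = h ^ 12 • (-(α₁.im / 144) ^ 2) • (1 : Matrix (Fin 2) (Fin 2) ℝ) := by
  have hD : !![(1 : ℝ), 0; 0, -1] * !![1, 0; 0, -1] = 1 := by
    simp [one_fin_two]
  rw [Rproj, Rproj, Matrix.map_re_mul_map_re_sub_one (Ψ₃_neg_mul_map_conj h), Ψ₃_map_im,
    Ψ₃_map_im, smul_mul_smul_comm, hD, smul_smul, ← neg_smul]
  congr 1
  ring

/-- the real projection of the fourth-order symmetric-conjugate
composition `S_{ᾱ₁h} ∘ S_{α₂h} ∘ S_{α₁h}` is pseudo-symmetric of order 11 for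
the harmonic oscillator. -/
theorem projected_three_stage_composition_pseudo_symmetric_order_eleven :
    (fun h : ℝ => Rproj (-h) * Rproj h - 1) =O[nhds 0] fun h : ℝ => h ^ 12 :=
  isBigO_of_le' _ fun h => by rw [Rproj_neg_mul_Rproj_sub_one, norm_smul, mul_comm]
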